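/- Let Λ be an artin algebra and 0 → X →^f M' →^g Y → 0 an (add M)-split sequence in mod Λ, i.e. M' ∈ add M, f is a left (add M)-approximation of X, and g is a right (add M)-approximation of Y. Let V be the two-term complex X → M' (with M' in degree 0), W the stalk complex Y in degree 0. Then the canonical chain map V → W induced by g is an M-quasi-isomorphism: for every N ∈ add M, Hom_Λ(N, V) → Hom_Λ(N, W) is a quasi-isomorphism of complexes of abelian groups. -/

import Mathlib

/-!
STATEMENT 18: Let `Λ` be an artin algebra (an algebra, finitely generated as a
module, over a commutative artinian ring `R`) and
`0 → X → M' → Y → 0` an `(add M)`-split sequence of finitely generated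
`Λ`-modules: `M' ∈ add M`, `f` a left `(add M)`-approximation of `X` and `g` a
right `(add M)`-approximation of `Y`.  Let `V` be the two-term complex
`X → M'` (with `M'` in degree 0) and `W` the stalk complex `Y` in degree 0.
Then the canonical chain map `V → W` induced by `g` is an
`M`-quasi-isomorphism: for every `N ∈ add M`, the induced map
`Hom_Λ(N, V) → Hom_Λ(N, W)` is a quasi-isomorphism of complexes of abelian
groups.
-/

open CategoryTheory Limits ZeroObject

universe v u

attribute [local instance] CategoryTheory.Abelian.hasFiniteBiproducts

noncomputable section

variable {A : Type u} [Category.{v} A] [Abelian A]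

/-- The two-term cochain complex `⋯ → 0 → X → Y → 0 → ⋯` determined by
`f : X ⟶ Y`, with `X` in degree `-1` and `Y` in degree `0`. -/
def twoTermCx {X Y : A} (f : X ⟶ Y) : CochainComplex A ℤ where
  X n := if n = -1 then X else if n = 0 then Y else 0
  d i j :=
    if h : i = -1 ∧ j = 0 then
      eqToHom (by rw [h.1]; norm_num) ≫ f ≫ eqToHom (by rw [h.2]; norm_num)
    else 0
  shape i j hij := by
    try dsimp only
    rw [dif_neg]
    rintro ⟨rfl, rfl⟩
    exact hij (by decide)
  d_comp_d' i j k _ _ := by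
    try dsimp only
    by_cases h : i = -1 ∧ j = 0
    · obtain ⟨hi, hj⟩ := h
      have hn : ¬ (j = -1 ∧ k = 0) := by rintro ⟨rfl, -⟩; omega
      rw [dif_neg hn, comp_zero]
    · rw [dif_neg h, zero_comp]

/-- `add M`: the class of direct summands of finite direct sums of copies of
`M`. -/
def addM (M : A) : Set A :=
  { N | ∃ (k : ℕ) (s : N ⟶ ⨁ (fun _ : Fin k => M)) (r : (⨁ fun _ : Fin k => M) ⟶ N),
      s ≫ r = 𝟙 N }


/-!
If `F` is a functor for which `0 → F X → F M' → F Y → 0` is short exact, then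
`F V → F W` is a quasi-isomorphism: `F V` is exact in degree `-1` because `F f` is mono, and in
degree `0` its homology is the cokernel of `F f`, which `F g` identifies with `F Y`.
For `F = Hom(N, -)` with `N ∈ add M`, the sequence stays short exact since `Hom(N, -)` is left
exact and `Hom(N, g)` is onto precisely because `g` is a right `(add M)`-approximation.
-/

section TwoTermCx

variable {X Y : A} (f : X ⟶ Y)

def twoTermCxXIsoNegOne : (twoTermCx f).X (-1) ≅ X :=
  eqToIso rfl

def twoTermCxXIsoZero : (twoTermCx f).X 0 ≅ Y :=
  eqToIso rfl

lemma twoTermCx_d_neg_one_zero :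
    (twoTermCx f).d (-1) 0 = (twoTermCxXIsoNegOne f).hom ≫ f ≫ (twoTermCxXIsoZero f).inv :=
  rfl

lemma twoTermCx_d_of_ne {i j : ℤ} (h : ¬ (i = -1 ∧ j = 0)) : (twoTermCx f).d i j = 0 :=
  dif_neg h

lemma isZero_twoTermCx_X {n : ℤ} (h₁ : n ≠ -1) (h₀ : n ≠ 0) : IsZero ((twoTermCx f).X n) := by
  simp only [twoTermCx, if_neg h₁, if_neg h₀]
  exact isZero_zero A

end TwoTermCx

def twoTermCxToSingle {X M Y : A} (f : X ⟶ M) (g : M ⟶ Y) (w : f ≫ g = 0) :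
    twoTermCx f ⟶ (HomologicalComplex.single A (ComplexShape.up ℤ) 0).obj Y :=
  HomologicalComplex.mkHomToSingle ((twoTermCxXIsoZero f).hom ≫ g)
    (by
      rintro i (hi : i + 1 = 0)
      obtain rfl : i = -1 := by omega
      simp [twoTermCx_d_neg_one_zero, w])

lemma twoTermCxToSingle_f_zero {X M Y : A} (f : X ⟶ M) (g : M ⟶ Y) (w : f ≫ g = 0) :
    (twoTermCxToSingle f g w).f 0 = (twoTermCxXIsoZero f).hom ≫ g ≫
      (HomologicalComplex.singleObjXSelf (ComplexShape.up ℤ) 0 Y).inv := by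
  simp [twoTermCxToSingle]

section MapTwoTermCx

variable {C : Type*} [Category C] [Abelian C] {X M Y : A} {f : X ⟶ M} {g : M ⟶ Y}
  {w : f ≫ g = 0} (F : A ⥤ C) [F.PreservesZeroMorphisms]

lemma quasiIsoAt_zero_map_twoTermCxToSingle (hS : ((ShortComplex.mk f g w).map F).ShortExact) :
    QuasiIsoAt ((F.mapHomologicalComplex (ComplexShape.up ℤ)).map (twoTermCxToSingle f g w)) 0 := by
  rw [quasiIsoAt_iff' _ (-1) 0 1 (by simp) (by simp),
    ShortComplex.quasiIso_iff_of_zeros' _ ?_ ?_ ?_]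
  · constructor
    · refine ShortComplex.exact_of_iso ?_ hS.exact
      refine ShortComplex.isoMk (F.mapIso (twoTermCxXIsoNegOne f).symm)
        (F.mapIso (twoTermCxXIsoZero f).symm)
        (F.mapIso (HomologicalComplex.singleObjXSelf (ComplexShape.up ℤ) 0 Y).symm) ?_ ?_
      · show F.map (twoTermCxXIsoNegOne f).inv ≫ F.map ((twoTermCx f).d (-1) 0) =
          F.map f ≫ F.map (twoTermCxXIsoZero f).inv
        rw [twoTermCx_d_neg_one_zero, ← F.map_comp, ← F.map_comp, Iso.inv_hom_id_assoc]
      · show F.map (twoTermCxXIsoZero f).inv ≫ F.map ((twoTermCxToSingle f g w).f 0) =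
          F.map g ≫ F.map (HomologicalComplex.singleObjXSelf (ComplexShape.up ℤ) 0 Y).inv
        rw [twoTermCxToSingle_f_zero, ← F.map_comp, ← F.map_comp, Iso.inv_hom_id_assoc]
    · have : Epi (F.map g) := hS.epi_g
      show Epi (F.map ((twoTermCxToSingle f g w).f 0))
      rw [twoTermCxToSingle_f_zero, F.map_comp, F.map_comp]
      infer_instance
  · show F.map ((twoTermCx f).d 0 1) = 0
    rw [twoTermCx_d_of_ne f (by omega), F.map_zero]
  · exact F.map_zero _ _
  · exact F.map_zero _ _

lemma exactAt_neg_one_map_twoTermCx (hf : Mono (F.map f)) :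
    ((F.mapHomologicalComplex (ComplexShape.up ℤ)).obj (twoTermCx f)).ExactAt (-1) := by
  rw [HomologicalComplex.exactAt_iff' _ (-2) (-1) 0 (by simp) (by simp)]
  refine (ShortComplex.exact_iff_mono _ ?_).2 ?_
  · show F.map ((twoTermCx f).d (-2) (-1)) = 0
    rw [twoTermCx_d_of_ne f (by omega), F.map_zero]
  · show Mono (F.map ((twoTermCx f).d (-1) 0))
    rw [twoTermCx_d_neg_one_zero, F.map_comp, F.map_comp]
    infer_instance

lemma quasiIso_map_twoTermCxToSingle (hS : ((ShortComplex.mk f g w).map F).ShortExact) :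
    QuasiIso ((F.mapHomologicalComplex (ComplexShape.up ℤ)).map (twoTermCxToSingle f g w)) := by
  rw [quasiIso_iff]
  intro n
  by_cases h₀ : n = 0
  · subst h₀
    exact quasiIsoAt_zero_map_twoTermCxToSingle F hS
  have hY : ((F.mapHomologicalComplex (ComplexShape.up ℤ)).obj
      ((HomologicalComplex.single A (ComplexShape.up ℤ) 0).obj Y)).ExactAt n :=
    .of_isZero (F.map_isZero (HomologicalComplex.isZero_single_obj_X _ 0 Y n h₀))
  rw [quasiIsoAt_iff_exactAt' _ _ hY]
  by_cases h₁ : n = -1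
  · subst h₁
    exact exactAt_neg_one_map_twoTermCx F hS.mono_f
  · exact .of_isZero (F.map_isZero (isZero_twoTermCx_X f h₁ h₀))

end MapTwoTermCx

lemma CategoryTheory.ShortComplex.Exact.shortExact_map_preadditiveCoyoneda {S : ShortComplex A}
    (hS : S.Exact) (hf : Mono S.f) {N : A}
    (hlift : ∀ ψ : N ⟶ S.X₃, ∃ h : N ⟶ S.X₂, h ≫ S.g = ψ) :
    (S.map (preadditiveCoyoneda.obj (Opposite.op N))).ShortExact where
  exact := by
    rw [ShortComplex.ab_exact_iff]
    intro (x : N ⟶ S.X₂) (hx : x ≫ S.g = 0)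
    obtain ⟨y, hy⟩ := hS.lift' x hx
    exact ⟨y, hy⟩
  mono_f := by
    rw [AddCommGrpCat.mono_iff_injective]
    intro (x : N ⟶ S.X₁) (y : N ⟶ S.X₁) (h : x ≫ S.f = y ≫ S.f)
    exact (cancel_mono S.f).1 h
  epi_g := (AddCommGrpCat.epi_iff_surjective _).2 hlift

theorem stmt18
    (Λ : Type u) [Ring Λ]
    (X M' Y M : ModuleCat.{u} Λ)
    (f : X ⟶ M') (g : M' ⟶ Y) (w : f ≫ g = 0)
    (hses : (ShortComplex.mk f g w).ShortExact)
    (hright : ∀ N ∈ addM M, ∀ ψ : N ⟶ Y, ∃ h : N ⟶ M', h ≫ g = ψ) :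
    ∀ N ∈ addM M,
      QuasiIso
        (((preadditiveCoyoneda.obj (Opposite.op N)).mapHomologicalComplex
            (ComplexShape.up ℤ)).map
          (HomologicalComplex.mkHomToSingle
            (eqToHom (by norm_num [twoTermCx]) ≫ g :
              (twoTermCx f).X 0 ⟶ Y)
            (by
              intro i hi
              obtain rfl : i = -1 := by
                have : i + 1 = 0 := hi
                omega
              simp [twoTermCx, w]
              first
                | (rw [eqToHom_refl, Category.id_comp]; exact w)
                | (erw [eqToHom_refl, Category.id_comp]; exact w)))) :=
  fun N hN => quasiIso_map_twoTermCxToSingle _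
    (hses.exact.shortExact_map_preadditiveCoyoneda hses.mono_f (hright N hN))
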